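/- For a Hamiltonian cycle C' = (v_1,...,v_n) on n vertices with edge weights ω, the schedule π_{C'} = (r_{v_1}, out_{v_1}, in_{v_2}, l_{v_2}, r_{v_2}, out_{v_2}, ..., out_{v_n}, in_{v_1}, l_{v_1}) has total setup time exactly 9n − 3 + ω(C'), where setup times are: ℓ(in_v, l_v) = 2, ℓ(r_v, out_v) = 2, ℓ(l_v, r_v) = 3, and ℓ(out_v, in_w) = 2 + ω({v, w}) for v ≠ w. -/

import Mathlib

inductive GJob (n : ℕ) where
  | jin (v : Fin n)
  | jl (v : Fin n)
  | jr (v : Fin n)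
  | jout (v : Fin n)

def totalSetup {α : Type} (ℓ : α → α → ℕ) : List α → ℕ
  | a :: b :: rest => ℓ a b + totalSetup ℓ (b :: rest)
  | _ => 0

/-!
Besides the opening setup `r_{v_1} → out_{v_1}` and the closing setup `in_{v_1} → l_{v_1}`
(`2` each), the schedule consists of the `n - 1` full blocks `in_v, l_v, r_v, out_v`, each costing
`2 + 3 + 2 = 7` internally, joined by the `n` links `out_{v_i} → in_{v_{i+1}}` of the cycle, each
costing `2 + ω {v_i, v_{i+1}}`: in total `4 + 7(n - 1) + 2n + ω(C') = 9n - 3 + ω(C')`.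
-/

theorem List.sum_zipWith_finRange_rotate_one {M : Type*} [AddCommMonoid M] (k : ℕ)
    (f : Fin (k + 1) → Fin (k + 1) → M) :
    (zipWith f (finRange (k + 1)) ((finRange (k + 1)).rotate 1)).sum = ∑ i, f i (i + 1) := by
  have h : zipWith f (finRange (k + 1)) ((finRange (k + 1)).rotate 1)
      = ofFn (fun i => f i (i + 1)) := by
    refine ext_getElem (by simp) fun j h₁ h₂ => ?_
    simp only [getElem_zipWith, getElem_rotate, getElem_finRange, List.getElem_ofFn]
    congr
    simp [Fin.ext_iff, Fin.val_add]
  rw [h, sum_ofFn]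

theorem totalSetup_jout_flatMap_blocks {m : ℕ} {ι : Type*} (ℓ : GJob m → GJob m → ℕ)
    (c : ι → Fin m)
    (h1 : ∀ v, ℓ (GJob.jin v) (GJob.jl v) = 2)
    (h2 : ∀ v, ℓ (GJob.jr v) (GJob.jout v) = 2)
    (h3 : ∀ v, ℓ (GJob.jl v) (GJob.jr v) = 3) (w : ι) :
    ∀ (u : ι) (L : List ι),
      totalSetup ℓ (GJob.jout (c u) ::
          (L.flatMap (fun i => [GJob.jin (c i), GJob.jl (c i), GJob.jr (c i), GJob.jout (c i)]) ++
            [GJob.jin (c w), GJob.jl (c w)]))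
        = 7 * L.length + 2 +
          (List.zipWith (fun i j => ℓ (GJob.jout (c i)) (GJob.jin (c j))) (u :: L) (L ++ [w])).sum
  | u, [] => by simp [totalSetup, h1, add_comm]
  | u, a :: L => by
    have ih := totalSetup_jout_flatMap_blocks ℓ c h1 h2 h3 w a L
    simp only [List.flatMap_cons, List.cons_append, List.nil_append] at ih ⊢
    simp only [totalSetup, h1, h2, h3, ih, List.zipWith_cons_cons, List.sum_cons, List.length_cons]
    omega

theorem stmt14_general (n : ℕ) (ω : Fin (n + 2) → Fin (n + 2) → ℕ)
    (ℓ : GJob (n + 2) → GJob (n + 2) → ℕ)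
    (h1 : ∀ v, ℓ (GJob.jin v) (GJob.jl v) = 2)
    (h2 : ∀ v, ℓ (GJob.jr v) (GJob.jout v) = 2)
    (h3 : ∀ v, ℓ (GJob.jl v) (GJob.jr v) = 3)
    (h4 : ∀ v w, v ≠ w → ℓ (GJob.jout v) (GJob.jin w) = 2 + ω v w)
    (c : Equiv.Perm (Fin (n + 2))) :
    totalSetup ℓ
      ([GJob.jr (c 0), GJob.jout (c 0)] ++
        ((List.finRange (n + 2)).drop 1).flatMap
          (fun i => [GJob.jin (c i), GJob.jl (c i), GJob.jr (c i), GJob.jout (c i)]) ++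
        [GJob.jin (c 0), GJob.jl (c 0)])
      = 9 * (n + 2) - 3 + ∑ i : Fin (n + 2), ω (c i) (c (i + 1)) := by
  -- `i + 1 ≠ i` in `Fin (n + 2)`: the cycle has at least two vertices.
  have hlink : ∀ i : Fin (n + 2),
      ℓ (GJob.jout (c i)) (GJob.jin (c (i + 1))) = 2 + ω (c i) (c (i + 1)) :=
    fun i => h4 _ _ (c.injective.ne (by simp))
  have hrange : List.finRange (n + 2) = 0 :: (List.finRange (n + 2)).drop 1 := by
    simp [List.finRange_succ]
  calc _ = 2 + (7 * (n + 1) + 2 +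
          ∑ i : Fin (n + 2), ℓ (GJob.jout (c i)) (GJob.jin (c (i + 1)))) := by
        rw [← List.sum_zipWith_finRange_rotate_one (n + 1)
          fun i j => ℓ (GJob.jout (c i)) (GJob.jin (c j))]
        set L := (List.finRange (n + 2)).drop 1
        have hL : 7 * (n + 1) = 7 * L.length := by simp [L]
        rw [hrange, hL, List.rotate_cons_succ, List.rotate_zero,
          ← totalSetup_jout_flatMap_blocks ℓ c h1 h2 h3]
        simp [totalSetup, h2]
    _ = _ := by
        simp only [hlink, Finset.sum_add_distrib, Finset.sum_const, Finset.card_univ,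
          Fintype.card_fin, smul_eq_mul]
        omega

theorem stmt14 (n : ℕ) (ω : Fin (n + 2) → Fin (n + 2) → ℕ)
    (hsym : ∀ v w, ω v w = ω w v)
    (ℓ : GJob (n + 2) → GJob (n + 2) → ℕ)
    (h1 : ∀ v, ℓ (GJob.jin v) (GJob.jl v) = 2)
    (h2 : ∀ v, ℓ (GJob.jr v) (GJob.jout v) = 2)
    (h3 : ∀ v, ℓ (GJob.jl v) (GJob.jr v) = 3)
    (h4 : ∀ v w, v ≠ w → ℓ (GJob.jout v) (GJob.jin w) = 2 + ω v w)
    (c : Equiv.Perm (Fin (n + 2))) :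
    totalSetup ℓ
      ([GJob.jr (c 0), GJob.jout (c 0)] ++
        ((List.finRange (n + 2)).drop 1).flatMap
          (fun i => [GJob.jin (c i), GJob.jl (c i), GJob.jr (c i), GJob.jout (c i)]) ++
        [GJob.jin (c 0), GJob.jl (c 0)])
      = 9 * (n + 2) - 3 + ∑ i : Fin (n + 2), ω (c i) (c (i + 1)) :=
  stmt14_general n ω ℓ h1 h2 h3 h4 c
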